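/- arXiv:1906.00370 — 4 statements merged into one kernel-verified Lean document; each statement's English description precedes it below -/
import Mathlib

section
/- Let 0 → N → M → L → 0 be a short exact sequence of graded A_n(K)-modules. Then M is strongly generalized Eulerian if and only if both N and L are strongly generalized Eulerian. -/
open FreeAlgebra

inductive WeylGen (n : ℕ) : Type
  | x : Fin n → WeylGen n
  | d : Fin n → WeylGen n

inductive WeylRel (K : Type) [Field K] (n : ℕ) :
    FreeAlgebra K (WeylGen n) → FreeAlgebra K (WeylGen n) → Prop
  | xx (i j : Fin n) : WeylRel K n (ι K (WeylGen.x i) * ι K (WeylGen.x j))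
      (ι K (WeylGen.x j) * ι K (WeylGen.x i))
  | dd (i j : Fin n) : WeylRel K n (ι K (WeylGen.d i) * ι K (WeylGen.d j))
      (ι K (WeylGen.d j) * ι K (WeylGen.d i))
  | dx_ne (i j : Fin n) (h : i ≠ j) : WeylRel K n (ι K (WeylGen.d i) * ι K (WeylGen.x j))
      (ι K (WeylGen.x j) * ι K (WeylGen.d i))
  | dx (i : Fin n) : WeylRel K n (ι K (WeylGen.d i) * ι K (WeylGen.x i))
      (1 + ι K (WeylGen.x i) * ι K (WeylGen.d i))

/-- The `n`-th Weyl algebra `A_n(K)`. -/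
abbrev WeylAlgebra (K : Type) [Field K] (n : ℕ) := RingQuot (WeylRel K n)

variable (K : Type) [Field K] (n : ℕ)

/-- The generator `X i`. -/
noncomputable def Wx (i : Fin n) : WeylAlgebra K n :=
  RingQuot.mkAlgHom K (WeylRel K n) (ι K (WeylGen.x i))

/-- The generator `∂ i`. -/
noncomputable def Wd (i : Fin n) : WeylAlgebra K n :=
  RingQuot.mkAlgHom K (WeylRel K n) (ι K (WeylGen.d i))

/-- The Euler operator `E_n = ∑ X_i ∂_i`. -/
noncomputable def euler : WeylAlgebra K n := ∑ i : Fin n, Wx K n i * Wd K n i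

/-- The monomial `X^γ ∂^α`. -/
noncomputable def Wmonomial (γ α : Fin n → ℕ) : WeylAlgebra K n :=
  (List.ofFn fun i => Wx K n i ^ γ i).prod * (List.ofFn fun i => Wd K n i ^ α i).prod

/-- `g` is a grading making `M` a graded module over the graded Weyl algebra
(`deg X_i = 1`, `deg ∂_i = -1`): `M` is the internal direct sum of the subgroups `g j` and
the generators act with degrees `1` and `-1`. -/
def IsGradedWeylModule (M : Type) [AddCommGroup M] [Module (WeylAlgebra K n) M]
    (g : ℤ → AddSubgroup M) : Prop :=
  DirectSum.IsInternal g ∧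
    (∀ (i : Fin n) (j : ℤ), ∀ m ∈ g j, Wx K n i • m ∈ g (j + 1)) ∧
    (∀ (i : Fin n) (j : ℤ), ∀ m ∈ g j, Wd K n i • m ∈ g (j - 1))

/-- A graded `A_n(K)`-module is strongly generalized Eulerian if there is a single `a > 0`
such that `(E_n - |w|)^a • w = 0` for every homogeneous `w`. -/
def IsStronglyGeneralizedEulerian (M : Type) [AddCommGroup M] [Module (WeylAlgebra K n) M]
    (g : ℤ → AddSubgroup M) : Prop :=
  ∃ a : ℕ, 0 < a ∧ ∀ (j : ℤ), ∀ m ∈ g j,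
    ((euler K n - (j : WeylAlgebra K n)) ^ a) • m = 0

/-- A graded `A_n(K)`-module is generalized Eulerian if for every homogeneous `w` there is
some `a > 0` (depending on `w`) with `(E_n - |w|)^a • w = 0`. -/
def IsGeneralizedEulerian (M : Type) [AddCommGroup M] [Module (WeylAlgebra K n) M]
    (g : ℤ → AddSubgroup M) : Prop :=
  ∀ (j : ℤ), ∀ m ∈ g j, ∃ a : ℕ, 0 < a ∧
    ((euler K n - (j : WeylAlgebra K n)) ^ a) • m = 0


/-! The only graded-module input is that a degree-preserving map commutes with the projections
onto homogeneous components. Hence homogeneous elements of `L` lift to homogeneous elements of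
`M`, and a homogeneous element of `M` in the image of `N` is the image of a homogeneous element
of `N`; so `N` and `L` inherit the exponent of `M`. Conversely, if `a` and `b` work for `N` and
`L`, then `(E_n - j)^b` sends `m ∈ M_j` into `f(N_j)` (it preserves degree), where `(E_n - j)^a`
kills it, so `a + b` works for `M`. -/

namespace DirectSum

variable {ι M L σ τ : Type*} [DecidableEq ι] [AddCommMonoid M] [AddCommMonoid L]
  [SetLike σ M] [AddSubmonoidClass σ M] [SetLike τ L] [AddSubmonoidClass τ L]
  (𝓜 : ι → σ) (𝓛 : ι → τ) [Decomposition 𝓜] [Decomposition 𝓛]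
  {F : Type*} [FunLike F M L] [AddMonoidHomClass F M L] {φ : F}
  (hφ : ∀ i, ∀ x ∈ 𝓜 i, φ x ∈ 𝓛 i)
include hφ

theorem decompose_map_apply (x : M) (i : ι) :
    (decompose 𝓛 (φ x) i : L) = φ (decompose 𝓜 x i) := by
  classical
  conv_lhs => rw [← sum_support_decompose 𝓜 x, map_sum, decompose_sum]
  rw [DFinsupp.finsetSum_apply, AddSubmonoidClass.coe_finsetSum]
  refine (Finset.sum_eq_single i (fun j _ hji => ?_) (fun hi => ?_)).trans ?_
  · exact decompose_of_mem_ne 𝓛 (hφ j _ (decompose 𝓜 x j).2) hji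
  · simp [DFinsupp.notMem_support_iff.mp hi]
  · exact decompose_of_mem_same 𝓛 (hφ i _ (decompose 𝓜 x i).2)

theorem exists_mem_map_eq_of_surjective (hsurj : Function.Surjective φ) {i : ι} {y : L}
    (hy : y ∈ 𝓛 i) : ∃ x ∈ 𝓜 i, φ x = y := by
  obtain ⟨x, rfl⟩ := hsurj y
  exact ⟨decompose 𝓜 x i, (decompose 𝓜 x i).2,
    (decompose_map_apply 𝓜 𝓛 hφ x i).symm.trans (decompose_of_mem_same 𝓛 hy)⟩

theorem mem_of_map_mem_of_injective (hinj : Function.Injective φ) {i : ι} {x : M}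
    (hx : φ x ∈ 𝓛 i) : x ∈ 𝓜 i := by
  have hxi : φ (decompose 𝓜 x i) = φ x :=
    (decompose_map_apply 𝓜 𝓛 hφ x i).symm.trans (decompose_of_mem_same 𝓛 hx)
  exact hinj hxi ▸ (decompose 𝓜 x i).2

end DirectSum

section Eulerian

variable {K n} {M N L : Type} [AddCommGroup M] [AddCommGroup N] [AddCommGroup L]
  [Module (WeylAlgebra K n) M] [Module (WeylAlgebra K n) N] [Module (WeylAlgebra K n) L]
  {gM : ℤ → AddSubgroup M} {gN : ℤ → AddSubgroup N} {gL : ℤ → AddSubgroup L}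

theorem IsGradedWeylModule.euler_smul_mem (hM : IsGradedWeylModule K n M gM) {j : ℤ} {m : M}
    (hm : m ∈ gM j) : euler K n • m ∈ gM j := by
  rw [euler, Finset.sum_smul]
  refine AddSubgroup.sum_mem _ fun i _ => ?_
  simpa [mul_smul] using hM.2.1 i (j - 1) _ (hM.2.2 i j m hm)

theorem IsGradedWeylModule.pow_euler_sub_smul_mem (hM : IsGradedWeylModule K n M gM) (a : ℕ)
    {j : ℤ} {m : M} (hm : m ∈ gM j) :
    ((euler K n - (j : WeylAlgebra K n)) ^ a) • m ∈ gM j := by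
  induction a with
  | zero => simpa using hm
  | succ a ih =>
    rw [pow_succ', mul_smul, sub_smul, Int.cast_smul_eq_zsmul]
    exact sub_mem (hM.euler_smul_mem ih) (AddSubgroup.zsmul_mem _ ih j)

theorem IsStronglyGeneralizedEulerian.of_injective (hM : IsStronglyGeneralizedEulerian K n M gM)
    (f : N →ₗ[WeylAlgebra K n] M) (hf : Function.Injective f)
    (hfgr : ∀ j, ∀ x ∈ gN j, f x ∈ gM j) : IsStronglyGeneralizedEulerian K n N gN := by
  obtain ⟨a, ha, hMa⟩ := hM
  exact ⟨a, ha, fun j x hx => hf <| by rw [map_smul, map_zero, hMa j _ (hfgr j x hx)]⟩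

theorem IsStronglyGeneralizedEulerian.of_surjective (hM : IsStronglyGeneralizedEulerian K n M gM)
    (hMint : DirectSum.IsInternal gM) (hLint : DirectSum.IsInternal gL)
    (g : M →ₗ[WeylAlgebra K n] L) (hg : Function.Surjective g)
    (hggr : ∀ j, ∀ x ∈ gM j, g x ∈ gL j) : IsStronglyGeneralizedEulerian K n L gL := by
  let _ := hMint.chooseDecomposition
  let _ := hLint.chooseDecomposition
  obtain ⟨a, ha, hMa⟩ := hM
  refine ⟨a, ha, fun j y hy => ?_⟩
  obtain ⟨x, hx, rfl⟩ := DirectSum.exists_mem_map_eq_of_surjective gM gL hggr hg hy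
  rw [← map_smul, hMa j x hx, map_zero]

theorem IsStronglyGeneralizedEulerian.of_exact (hN : IsStronglyGeneralizedEulerian K n N gN)
    (hL : IsStronglyGeneralizedEulerian K n L gL) (hMgr : IsGradedWeylModule K n M gM)
    (hNint : DirectSum.IsInternal gN)
    (f : N →ₗ[WeylAlgebra K n] M) (g : M →ₗ[WeylAlgebra K n] L)
    (hf : Function.Injective f) (hfg : Function.Exact f g)
    (hfgr : ∀ j, ∀ x ∈ gN j, f x ∈ gM j) (hggr : ∀ j, ∀ x ∈ gM j, g x ∈ gL j) :
    IsStronglyGeneralizedEulerian K n M gM := by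
  let _ := hMgr.1.chooseDecomposition
  let _ := hNint.chooseDecomposition
  obtain ⟨a, ha, hNa⟩ := hN
  obtain ⟨b, -, hLb⟩ := hL
  refine ⟨a + b, by omega, fun j m hm => ?_⟩
  set e := euler K n - (j : WeylAlgebra K n)
  have hbm : (e ^ b) • m ∈ gM j := hMgr.pow_euler_sub_smul_mem b hm
  obtain ⟨x, hx⟩ : (e ^ b) • m ∈ Set.range f :=
    (hfg _).mp (by rw [map_smul, hLb j _ (hggr j m hm)])
  have hxj : x ∈ gN j :=
    DirectSum.mem_of_map_mem_of_injective gN gM hfgr hf (hx ▸ hbm)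
  rw [pow_add, mul_smul, ← hx, ← map_smul, hNa j x hxj, map_zero]

end Eulerian

theorem sge_of_ses
    (M N L : Type) [AddCommGroup M] [AddCommGroup N] [AddCommGroup L]
    [Module (WeylAlgebra K n) M] [Module (WeylAlgebra K n) N] [Module (WeylAlgebra K n) L]
    (gM : ℤ → AddSubgroup M) (gN : ℤ → AddSubgroup N) (gL : ℤ → AddSubgroup L)
    (hM : IsGradedWeylModule K n M gM) (hN : IsGradedWeylModule K n N gN)
    (hL : IsGradedWeylModule K n L gL)
    (f : N →ₗ[WeylAlgebra K n] M) (g : M →ₗ[WeylAlgebra K n] L)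
    (hf : Function.Injective f) (hg : Function.Surjective g)
    (hfg : Function.Exact f g)
    (hfgr : ∀ (j : ℤ), ∀ x ∈ gN j, f x ∈ gM j)
    (hggr : ∀ (j : ℤ), ∀ x ∈ gM j, g x ∈ gL j) :
    IsStronglyGeneralizedEulerian K n M gM ↔
      IsStronglyGeneralizedEulerian K n N gN ∧ IsStronglyGeneralizedEulerian K n L gL :=
  ⟨fun hMe => ⟨hMe.of_injective f hf hfgr, hMe.of_surjective hM.1 hL.1 g hg hggr⟩,
    fun ⟨hNe, hLe⟩ => hNe.of_exact hLe hM hN.1 f g hf hfg hfgr hggr⟩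
end

section
/- A finitely generated graded A_n(K)-module M is generalized Eulerian if and only if it is strongly generalized Eulerian. -/
open FreeAlgebra

variable (K : Type) [Field K] (n : ℕ)

/-!
The Euler operator satisfies `E X_i = X_i (E + 1)` and `E ∂_i = ∂_i (E - 1)`, so for every `a`
the elements whose degree-`j` components are all killed by `(E - j)^a` are stable under `X_i`
and `∂_i`. Generalized Eulerianity makes them stable under the scalars `K` as well: a component of
`c • w` in a degree `e ≠ j` would be killed by powers of both `E - e` and `E - j`, which are
coprime in characteristic zero. These sets therefore form an increasing chain of submodules
exhausting `M`, and a finitely generated module is reached at a finite stage.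
-/

namespace DirectSum

variable {ι M σ : Type*} [DecidableEq ι] [AddCommMonoid M] [SetLike σ M]
  [AddSubmonoidClass σ M] (ℳ : ι → σ) [Decomposition ℳ]

theorem mem_of_forall_ne_decompose_eq_zero {x : M} {i : ι}
    (h : ∀ j ≠ i, (decompose ℳ x j : M) = 0) : x ∈ ℳ i := by
  have hx : decompose ℳ x = of (fun j ↦ ℳ j) i (decompose ℳ x i) := by
    ext j
    by_cases hj : j = i
    · subst hj; rw [of_eq_same]
    · rw [h j hj, of_eq_of_ne _ _ _ hj, ZeroMemClass.coe_zero]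
  rw [← (decompose ℳ).symm_apply_apply x, hx, decompose_symm_of]
  exact SetLike.coe_mem _

theorem coe_decompose_smul_of_shift [AddGroup ι] {A : Type*} [Monoid A] [DistribMulAction A M]
    {r : A} {d : ι} (hr : ∀ e, ∀ m ∈ ℳ e, r • m ∈ ℳ (e + d)) (m : M) (j : ι) :
    (decompose ℳ (r • m) j : M) = r • (decompose ℳ m (j - d) : M) := by
  induction m using Decomposition.inductionOn ℳ with
  | zero => simp
  | @homogeneous e m =>
    by_cases h : e + d = j
    · subst h
      rw [decompose_of_mem_same ℳ (hr e m m.2), add_sub_cancel_right,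
        decompose_of_mem_same ℳ m.2]
    · rw [decompose_of_mem_ne ℳ (hr e m m.2) h,
        decompose_of_mem_ne ℳ m.2 (by rintro rfl; exact h (sub_add_cancel j d)), smul_zero]
  | add x y hx hy =>
    rw [smul_add, decompose_add, add_apply, AddMemClass.coe_add, hx, hy, decompose_add, add_apply,
      AddMemClass.coe_add, smul_add]

end DirectSum

open Polynomial in
theorem eq_zero_of_pow_sub_algebraMap_smul_eq_zero {R A M : Type*} [CommRing R] [Ring A]
    [Algebra R A] [AddCommGroup M] [Module A M] (x : A) {μ ν : R} (hμν : IsUnit (μ - ν))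
    {a b : ℕ} {u : M} (hμ : (x - algebraMap R A μ) ^ a • u = 0)
    (hν : (x - algebraMap R A ν) ^ b • u = 0) : u = 0 := by
  obtain ⟨p, q, hpq⟩ := (isCoprime_X_sub_C_of_isUnit_sub hμν).pow (m := a) (n := b)
  have hpq_x := congrArg (aeval x) hpq
  simp only [map_add, map_mul, map_pow, map_sub, aeval_X, aeval_C, map_one] at hpq_x
  calc u = (1 : A) • u := (one_smul A u).symm
    _ = 0 := by
      rw [← hpq_x, add_smul, mul_smul, mul_smul, hμ, hν, smul_zero, smul_zero, add_zero]

namespace WeylAlgebra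

variable {K n}

theorem Wx_commute (i j : Fin n) : Commute (Wx K n i) (Wx K n j) := by
  simpa only [Commute, SemiconjBy, map_mul, Wx] using
    RingQuot.mkAlgHom_rel K (WeylRel.xx (K := K) i j)

theorem Wd_commute (i j : Fin n) : Commute (Wd K n i) (Wd K n j) := by
  simpa only [Commute, SemiconjBy, map_mul, Wd] using
    RingQuot.mkAlgHom_rel K (WeylRel.dd (K := K) i j)

theorem Wd_mul_Wx (k i : Fin n) :
    Wd K n k * Wx K n i = Wx K n i * Wd K n k + if k = i then 1 else 0 := by
  split_ifs with h
  · subst h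
    rw [add_comm]
    simpa only [map_mul, map_add, map_one, Wx, Wd] using
      RingQuot.mkAlgHom_rel K (WeylRel.dx (K := K) k)
  · simpa only [map_mul, add_zero, Wx, Wd] using
      RingQuot.mkAlgHom_rel K (WeylRel.dx_ne (K := K) k i h)

theorem euler_mul_Wx (i : Fin n) : euler K n * Wx K n i = Wx K n i * euler K n + Wx K n i := by
  simp only [euler, Finset.sum_mul, Finset.mul_sum, mul_assoc, Wd_mul_Wx, mul_add, mul_ite,
    mul_one, mul_zero, Finset.sum_add_distrib, Finset.sum_ite_eq', Finset.mem_univ, if_true]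
  congr 1
  refine Finset.sum_congr rfl fun k _ ↦ ?_
  rw [← mul_assoc, (Wx_commute k i).eq, mul_assoc]

theorem Wx_mul_Wd (k i : Fin n) :
    Wx K n k * Wd K n i = Wd K n i * Wx K n k - if i = k then 1 else 0 := by
  rw [Wd_mul_Wx, add_sub_cancel_right]

theorem euler_mul_Wd (i : Fin n) : euler K n * Wd K n i = Wd K n i * euler K n - Wd K n i := by
  simp only [euler, Finset.sum_mul, Finset.mul_sum, mul_assoc, (Wd_commute _ i).eq]
  have hk (k : Fin n) : Wx K n k * (Wd K n i * Wd K n k) =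
      Wd K n i * (Wx K n k * Wd K n k) - if i = k then Wd K n k else 0 := by
    rw [← mul_assoc, Wx_mul_Wd, sub_mul, ite_mul, one_mul, zero_mul, mul_assoc]
  simp only [hk, Finset.sum_sub_distrib, Finset.sum_ite_eq, Finset.mem_univ, if_true]

theorem semiconjBy_Wx (i : Fin n) (j : ℤ) :
    SemiconjBy (Wx K n i) (euler K n - ((j - 1 : ℤ) : WeylAlgebra K n)) (euler K n - j) := by
  rw [SemiconjBy, mul_sub, sub_mul, euler_mul_Wx, (Int.cast_commute j _).eq, Int.cast_sub,
    Int.cast_one, mul_sub, mul_one]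
  abel

theorem semiconjBy_Wd (i : Fin n) (j : ℤ) :
    SemiconjBy (Wd K n i) (euler K n - ((j + 1 : ℤ) : WeylAlgebra K n)) (euler K n - j) := by
  rw [SemiconjBy, mul_sub, sub_mul, euler_mul_Wd, (Int.cast_commute j _).eq, Int.cast_add,
    Int.cast_one, mul_add, mul_one]
  abel

theorem adjoin_range_Wx_union_range_Wd :
    Algebra.adjoin K (Set.range (Wx K n) ∪ Set.range (Wd K n)) = ⊤ := by
  rw [eq_top_iff]
  rintro r -
  obtain ⟨p, rfl⟩ := RingQuot.mkAlgHom_surjective K (WeylRel K n) r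
  induction p using FreeAlgebra.induction with
  | grade0 c => rw [AlgHom.commutes]; exact Subalgebra.algebraMap_mem _ c
  | grade1 x =>
    cases x with
    | x i => exact Algebra.subset_adjoin (Or.inl ⟨i, rfl⟩)
    | d i => exact Algebra.subset_adjoin (Or.inr ⟨i, rfl⟩)
  | mul a b ha hb => rw [map_mul]; exact mul_mem ha hb
  | add a b ha hb => rw [map_add]; exact add_mem ha hb

theorem smul_mem_of_forall_generators {M : Type*} [AddCommGroup M] [Module (WeylAlgebra K n) M]
    (N : AddSubgroup M) (hc : ∀ c : K, ∀ m ∈ N, algebraMap K (WeylAlgebra K n) c • m ∈ N)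
    (hx : ∀ i, ∀ m ∈ N, Wx K n i • m ∈ N) (hd : ∀ i, ∀ m ∈ N, Wd K n i • m ∈ N)
    (r : WeylAlgebra K n) {m : M} (hm : m ∈ N) : r • m ∈ N := by
  have hr : r ∈ Algebra.adjoin K (Set.range (Wx K n) ∪ Set.range (Wd K n)) :=
    adjoin_range_Wx_union_range_Wd (K := K) ▸ Algebra.mem_top
  induction hr using Algebra.adjoin_induction generalizing m with
  | mem x hx' =>
    rcases hx' with ⟨i, rfl⟩ | ⟨i, rfl⟩
    exacts [hx i m hm, hd i m hm]
  | algebraMap c => exact hc c m hm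
  | add x y _ _ hx hy => rw [add_smul]; exact N.add_mem (hx hm) (hy hm)
  | mul x y _ _ hx hy => rw [mul_smul]; exact hx (hy hm)

end WeylAlgebra

section Graded

open DirectSum

variable {K n} {M : Type} [AddCommGroup M] [Module (WeylAlgebra K n) M] {g : ℤ → AddSubgroup M}

namespace IsGradedWeylModule

theorem euler_smul_mem_s9 (hM : IsGradedWeylModule K n M g) {e : ℤ} {m : M} (hm : m ∈ g e) :
    euler K n • m ∈ g e := by
  rw [euler, Finset.sum_smul]
  refine AddSubgroup.sum_mem _ fun i _ ↦ ?_
  rw [mul_smul]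
  simpa using hM.2.1 i (e - 1) _ (hM.2.2 i e m hm)

theorem pow_euler_sub_smul_mem_s9 (hM : IsGradedWeylModule K n M g) (j : ℤ) (a : ℕ) {e : ℤ}
    {m : M} (hm : m ∈ g e) : (euler K n - (j : WeylAlgebra K n)) ^ a • m ∈ g e := by
  induction a with
  | zero => simpa using hm
  | succ a ih =>
    rw [pow_succ', mul_smul, sub_smul, Int.cast_smul_eq_zsmul]
    exact sub_mem (hM.euler_smul_mem_s9 ih) (zsmul_mem ih j)

/-- `g j` is only an additive subgroup, so stability under `K` is not part of the grading. -/
theorem algebraMap_smul_mem [CharZero K] [Decomposition g] (hM : IsGradedWeylModule K n M g)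
    (hge : IsGeneralizedEulerian K n M g) (c : K) {j : ℤ} {w : M} (hw : w ∈ g j) :
    algebraMap K (WeylAlgebra K n) c • w ∈ g j := by
  obtain ⟨a, -, ha⟩ := hge j w hw
  set v := algebraMap K (WeylAlgebra K n) c • w
  have hv : (euler K n - (j : WeylAlgebra K n)) ^ a • v = 0 := by
    rw [← mul_smul, ← Algebra.commutes, mul_smul, ha, smul_zero]
  refine mem_of_forall_ne_decompose_eq_zero g fun e he ↦ ?_
  obtain ⟨b, -, hb⟩ := hge e _ (decompose g v e).2
  have hvj := coe_decompose_smul_of_shift g (d := 0)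
    (fun e' m hm ↦ by simpa using hM.pow_euler_sub_smul_mem_s9 j a hm) v e
  rw [hv, sub_zero, decompose_zero, DirectSum.zero_apply, ZeroMemClass.coe_zero] at hvj
  refine eq_zero_of_pow_sub_algebraMap_smul_eq_zero (euler K n) (μ := (e : K)) (ν := (j : K))
    (sub_ne_zero.2 (Int.cast_injective.ne he)).isUnit (a := b) (b := a) ?_ ?_
  · rwa [map_intCast]
  · rw [map_intCast, ← hvj]

end IsGradedWeylModule

variable (K n g) in
def eulerFiltration [Decomposition g] (a : ℕ) : AddSubgroup M where
  carrier :=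
    {m | ∀ j : ℤ, (euler K n - (j : WeylAlgebra K n)) ^ a • (decompose g m j : M) = 0}
  add_mem' hx hy j := by
    rw [decompose_add, DirectSum.add_apply, AddMemClass.coe_add, smul_add, hx j, hy j, add_zero]
  zero_mem' j := by rw [decompose_zero, DirectSum.zero_apply, ZeroMemClass.coe_zero, smul_zero]
  neg_mem' hx j := by
    rw [decompose_neg, DFinsupp.neg_apply, NegMemClass.coe_neg, smul_neg, hx j, neg_zero]

section eulerFiltration

variable [Decomposition g]

theorem eulerFiltration_mono : Monotone (eulerFiltration K n g) := fun a b hab m hm j ↦ by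
  rw [← Nat.sub_add_cancel hab, pow_add, mul_smul, hm j, smul_zero]

theorem mem_eulerFiltration_of_mem {a : ℕ} {j : ℤ} {w : M} (hw : w ∈ g j)
    (h : (euler K n - (j : WeylAlgebra K n)) ^ a • w = 0) : w ∈ eulerFiltration K n g a := by
  intro e
  by_cases hej : j = e
  · subst hej; rwa [decompose_of_mem_same g hw]
  · rw [decompose_of_mem_ne g hw hej, smul_zero]

theorem smul_mem_eulerFiltration {a : ℕ} {r : WeylAlgebra K n} {d : ℤ}
    (hr : ∀ e, ∀ m ∈ g e, r • m ∈ g (e + d))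
    (hE : ∀ j : ℤ, SemiconjBy r (euler K n - ((j - d : ℤ) : WeylAlgebra K n)) (euler K n - j))
    {m : M} (hm : m ∈ eulerFiltration K n g a) : r • m ∈ eulerFiltration K n g a := by
  intro j
  rw [coe_decompose_smul_of_shift g hr, ← mul_smul, ← ((hE j).pow_right a).eq, mul_smul,
    hm (j - d), smul_zero]

theorem exists_mem_eulerFiltration (hge : IsGeneralizedEulerian K n M g) (m : M) :
    ∃ a, m ∈ eulerFiltration K n g a := by
  induction m using Decomposition.inductionOn g with
  | zero => exact ⟨0, zero_mem _⟩
  | @homogeneous j w =>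
    obtain ⟨a, -, ha⟩ := hge j w w.2
    exact ⟨a, mem_eulerFiltration_of_mem w.2 ha⟩
  | add x y hx hy =>
    obtain ⟨a, ha⟩ := hx
    obtain ⟨b, hb⟩ := hy
    exact ⟨max a b, add_mem (eulerFiltration_mono (le_max_left a b) ha)
      (eulerFiltration_mono (le_max_right a b) hb)⟩

variable [CharZero K]

def IsGradedWeylModule.eulerSubmodule (hM : IsGradedWeylModule K n M g)
    (hge : IsGeneralizedEulerian K n M g) : ℕ →o Submodule (WeylAlgebra K n) M where
  toFun a :=
    { eulerFiltration K n g a with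
      smul_mem' := fun r m hm ↦ WeylAlgebra.smul_mem_of_forall_generators _
        (fun c _ hm ↦ smul_mem_eulerFiltration (d := 0)
          (fun e w hw ↦ by simpa using hM.algebraMap_smul_mem hge c hw)
          (fun j ↦ by rw [sub_zero]; exact Algebra.commute_algebraMap_left c _) hm)
        (fun i _ hm ↦
          smul_mem_eulerFiltration (d := 1) (hM.2.1 i) (WeylAlgebra.semiconjBy_Wx i) hm)
        (fun i _ hm ↦ smul_mem_eulerFiltration (d := -1)
          (fun e w hw ↦ by simpa [← sub_eq_add_neg] using hM.2.2 i e w hw)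
          (fun j ↦ by simpa using WeylAlgebra.semiconjBy_Wd i j) hm)
        r hm }
  monotone' _ _ hab := eulerFiltration_mono hab

theorem IsGradedWeylModule.iSup_eulerSubmodule (hM : IsGradedWeylModule K n M g)
    (hge : IsGeneralizedEulerian K n M g) : ⨆ a, hM.eulerSubmodule hge a = ⊤ :=
  eq_top_iff.2 fun m _ ↦ (Submodule.mem_iSup_of_chain _ m).2 (exists_mem_eulerFiltration hge m)

end eulerFiltration

end Graded

/-- A finitely generated graded `A_n(K)`-module is generalized Eulerian if and only if it is
strongly generalized Eulerian. -/
theorem ge_iff_sge_of_finite [CharZero K]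
    (M : Type) [AddCommGroup M] [Module (WeylAlgebra K n) M]
    [Module.Finite (WeylAlgebra K n) M]
    (gM : ℤ → AddSubgroup M) (hM : IsGradedWeylModule K n M gM) :
    IsGeneralizedEulerian K n M gM ↔ IsStronglyGeneralizedEulerian K n M gM := by
  let _ : DirectSum.Decomposition gM := hM.1.chooseDecomposition
  refine ⟨fun hge ↦ ?_, fun ⟨a, ha, h⟩ j m hm ↦ ⟨a, ha, h j m hm⟩⟩
  obtain ⟨a, ha⟩ := Module.Finite.fg_top.stabilizes_of_iSup_eq (hM.eulerSubmodule hge)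
    (hM.iSup_eulerSubmodule hge)
  refine ⟨a + 1, a.succ_pos, fun j m hm ↦ ?_⟩
  have hm' : m ∈ hM.eulerSubmodule hge (a + 1) :=
    (hM.eulerSubmodule hge).monotone a.le_succ (ha ▸ Submodule.mem_top)
  simpa only [DirectSum.decompose_of_mem_same gM hm] using hm' j
end

section
/- Let J be a homogeneous left ideal of the graded Weyl algebra A_n(K). The quotient A_n(K)/J is a strongly generalized Eulerian A_n(K)-module if and only if E_n^a ∈ J for some a > 0, where E_n is the Euler operator. -/
open FreeAlgebra

variable (K : Type) [Field K] (n : ℕ)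

/-!
Write `ad E` for `w ↦ E * w - w * E`. Since `ad E` is a derivation with `ad E (X_i) = X_i` and
`ad E (∂_i) = -∂_i`, the homogeneous elements of degree `j` on which `ad E` acts by `j` span a
subalgebra containing the generators; by uniqueness of homogeneous components every `w` of
degree `j` is such an eigenvector. Then `(E - j) w = w E`, so `(E - j)^a w = w E^a`, and
`(E - |w|)^a` kills the class of `w` in `A_n(K)/J` iff `w E^a ∈ J`. Taking `w = 1` gives
`E^a ∈ J`; conversely `E^a ∈ J` implies `w E^a ∈ J` because `J` is a left ideal.
-/

open Module DirectSum

section CommutatorEigenspace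

variable {R A : Type*} [CommRing R] [Ring A] [Algebra R A]

def commutatorEigenspace (e : A) (μ : R) : Submodule R A :=
  End.eigenspace (LinearMap.mulLeft R e - LinearMap.mulRight R e) μ

theorem mem_commutatorEigenspace {e w : A} {μ : R} :
    w ∈ commutatorEigenspace e μ ↔ e * w - w * e = μ • w := by
  simp [commutatorEigenspace]

theorem one_mem_commutatorEigenspace (e : A) : (1 : A) ∈ commutatorEigenspace e (0 : R) := by
  simp [mem_commutatorEigenspace]

theorem mul_mem_commutatorEigenspace {e x y : A} {μ ν : R}
    (hx : x ∈ commutatorEigenspace e μ) (hy : y ∈ commutatorEigenspace e ν) :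
    x * y ∈ commutatorEigenspace e (μ + ν) := by
  rw [mem_commutatorEigenspace] at *
  calc e * (x * y) - x * y * e = (e * x - x * e) * y + x * (e * y - y * e) := by noncomm_ring
    _ = (μ + ν) • (x * y) := by rw [hx, hy, smul_mul_assoc, mul_smul_comm, add_smul]

theorem semiconjBy_of_mem_commutatorEigenspace {e w : A} {μ : R}
    (hw : w ∈ commutatorEigenspace e μ) : SemiconjBy w e (e - algebraMap R A μ) := by
  rw [mem_commutatorEigenspace, Algebra.smul_def] at hw
  rw [SemiconjBy, sub_mul, ← hw]
  abel

end CommutatorEigenspace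

section Decomposition

variable {ι R M σ : Type*} [DecidableEq ι] [Semiring R] [AddCommMonoid M] [Module R M]
  [SetLike σ M] [AddSubmonoidClass σ M] (𝒜 : ι → σ) [Decomposition 𝒜] {B : ι → Submodule R M}

theorem DirectSum.decompose_mem_of_mem_iSup (hB : ∀ i, ∀ x ∈ B i, x ∈ 𝒜 i) {x : M}
    (hx : x ∈ ⨆ i, B i) (j : ι) : (decompose 𝒜 x j : M) ∈ B j := by
  refine Submodule.iSup_induction B (motive := fun x => (decompose 𝒜 x j : M) ∈ B j) hx
    (fun i x hx => ?_) (by simp) fun x y hx hy => by simpa using add_mem hx hy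
  rcases eq_or_ne i j with rfl | hij
  · rwa [decompose_of_mem_same 𝒜 (hB i x hx)]
  · rw [decompose_of_mem_ne 𝒜 (hB i x hx) hij]
    exact zero_mem _

theorem DirectSum.mem_of_mem_of_iSup_eq_top (hB : ∀ i, ∀ x ∈ B i, x ∈ 𝒜 i)
    (htop : ⨆ i, B i = ⊤) {j : ι} {x : M} (hx : x ∈ 𝒜 j) : x ∈ B j := by
  have := decompose_mem_of_mem_iSup 𝒜 hB (htop ▸ Submodule.mem_top (x := x)) j
  rwa [decompose_of_mem_same 𝒜 hx] at this

end Decomposition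

theorem mem_commutatorEigenspace_of_mem_grade {R A : Type*} [CommRing R] [Ring A] [Algebra R A]
    (𝒜 : ℤ → AddSubgroup A) [Decomposition 𝒜] (hone : (1 : A) ∈ 𝒜 0)
    (hmul : ∀ (i j : ℤ), ∀ a ∈ 𝒜 i, ∀ b ∈ 𝒜 j, a * b ∈ 𝒜 (i + j))
    (hsmul : ∀ (r : R) (i : ℤ), ∀ a ∈ 𝒜 i, r • a ∈ 𝒜 i)
    {s : Set A} (hs : Algebra.adjoin R s = ⊤) (e : A)
    (hgen : ∀ x ∈ s, ∃ i : ℤ, x ∈ 𝒜 i ∧ x ∈ commutatorEigenspace e (i : R))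
    {j : ℤ} {w : A} (hw : w ∈ 𝒜 j) : w ∈ commutatorEigenspace e (j : R) := by
  -- the span of all the `B i` is a subalgebra containing `s`, hence everything
  let B : ℤ → Submodule R A := fun i =>
    { carrier := 𝒜 i ∩ commutatorEigenspace e (i : R)
      add_mem' := fun hx hy => ⟨add_mem hx.1 hy.1, add_mem hx.2 hy.2⟩
      zero_mem' := ⟨zero_mem _, zero_mem _⟩
      smul_mem' := fun r _ hx => ⟨hsmul r _ _ hx.1, Submodule.smul_mem _ r hx.2⟩ }
  have hB_mul : (⨆ i, B i) * (⨆ i, B i) ≤ ⨆ i, B i := by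
    simp only [Submodule.iSup_mul, Submodule.mul_iSup, iSup_le_iff, Submodule.mul_le]
    intro k i a ha b hb
    refine Submodule.mem_iSup_of_mem (i + k) ⟨hmul i k a ha.1 b hb.1, ?_⟩
    simpa using mul_mem_commutatorEigenspace ha.2 hb.2
  have hB_one : (1 : A) ∈ B 0 := ⟨hone, by simpa using one_mem_commutatorEigenspace (R := R) e⟩
  let S : Subalgebra R A := (⨆ i, B i).toSubalgebra (Submodule.mem_iSup_of_mem 0 hB_one)
    fun x y hx hy => hB_mul (Submodule.mul_mem_mul hx hy)
  have hS : S = ⊤ := eq_top_iff.2 <| hs ▸ Algebra.adjoin_le fun x hx =>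
    let ⟨i, hi⟩ := hgen x hx
    Submodule.mem_iSup_of_mem (p := B) i hi
  have htop : ⨆ i, B i = ⊤ := by
    simpa [S] using congrArg Subalgebra.toSubmodule hS
  exact (DirectSum.mem_of_mem_of_iSup_eq_top 𝒜 (B := B) (fun i x hx => hx.1) htop hw).2

section WeylRelations

variable {K n}

theorem Wx_commute (i j : Fin n) : Commute (Wx K n i) (Wx K n j) := by
  have h := RingQuot.mkAlgHom_rel K (WeylRel.xx (K := K) i j)
  rw [map_mul, map_mul] at h
  exact h

theorem Wd_commute (i j : Fin n) : Commute (Wd K n i) (Wd K n j) := by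
  have h := RingQuot.mkAlgHom_rel K (WeylRel.dd (K := K) i j)
  rw [map_mul, map_mul] at h
  exact h

theorem Wd_commute_Wx {i j : Fin n} (h : i ≠ j) : Commute (Wd K n i) (Wx K n j) := by
  have h := RingQuot.mkAlgHom_rel K (WeylRel.dx_ne (K := K) i j h)
  rw [map_mul, map_mul] at h
  exact h

theorem Wd_mul_Wx (i : Fin n) : Wd K n i * Wx K n i = 1 + Wx K n i * Wd K n i := by
  simpa [Wx, Wd] using RingQuot.mkAlgHom_rel K (WeylRel.dx (K := K) i)

theorem Wx_mem_commutatorEigenspace_euler (k : Fin n) :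
    Wx K n k ∈ commutatorEigenspace (euler K n) (1 : K) := by
  have key : ∀ i, Wx K n i * Wd K n i * Wx K n k - Wx K n k * (Wx K n i * Wd K n i) =
      if i = k then Wx K n k else 0 := by
    intro i
    rcases eq_or_ne i k with rfl | h
    · rw [if_pos rfl, mul_assoc, Wd_mul_Wx]; noncomm_ring
    · rw [if_neg h, mul_assoc, (Wd_commute_Wx h).eq, ← mul_assoc, (Wx_commute i k).eq, mul_assoc,
        sub_self]
  rw [mem_commutatorEigenspace, euler, Finset.sum_mul, Finset.mul_sum, ← Finset.sum_sub_distrib,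
    Finset.sum_congr rfl fun i _ => key i, Fintype.sum_ite_eq', one_smul]

theorem Wd_mem_commutatorEigenspace_euler (k : Fin n) :
    Wd K n k ∈ commutatorEigenspace (euler K n) (-1 : K) := by
  have key : ∀ i, Wx K n i * Wd K n i * Wd K n k - Wd K n k * (Wx K n i * Wd K n i) =
      if i = k then -Wd K n k else 0 := by
    intro i
    rcases eq_or_ne i k with rfl | h
    · rw [if_pos rfl, ← mul_assoc, Wd_mul_Wx]; noncomm_ring
    · rw [if_neg h, mul_assoc, (Wd_commute i k).eq, ← mul_assoc, ← (Wd_commute_Wx h.symm).eq,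
        mul_assoc, sub_self]
  rw [mem_commutatorEigenspace, euler, Finset.sum_mul, Finset.mul_sum, ← Finset.sum_sub_distrib,
    Finset.sum_congr rfl fun i _ => key i, Fintype.sum_ite_eq']
  exact (neg_one_smul K _).symm

variable (K n)

theorem adjoin_range_Wx_union_range_Wd :
    Algebra.adjoin K (Set.range (Wx K n) ∪ Set.range (Wd K n)) = ⊤ := by
  have hgen : Set.range (Wx K n) ∪ Set.range (Wd K n) =
      RingQuot.mkAlgHom K (WeylRel K n) '' Set.range (FreeAlgebra.ι K) := by
    ext w
    constructor
    · rintro (⟨i, rfl⟩ | ⟨i, rfl⟩)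
      exacts [⟨_, ⟨WeylGen.x i, rfl⟩, rfl⟩, ⟨_, ⟨WeylGen.d i, rfl⟩, rfl⟩]
    · rintro ⟨_, ⟨g | g, rfl⟩, rfl⟩
      exacts [Or.inl ⟨g, rfl⟩, Or.inr ⟨g, rfl⟩]
  rw [hgen, ← AlgHom.map_adjoin, FreeAlgebra.adjoin_range_ι, Algebra.map_top,
    AlgHom.range_eq_top]
  exact RingQuot.mkAlgHom_surjective K _

end WeylRelations

/-- Let `𝒜` be the standard grading of the Weyl algebra (`deg X_i = 1`, `deg ∂_i = -1`) and
`J` a homogeneous left ideal of `A_n(K)`. The quotient `A_n(K)/J` is a strongly generalized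
Eulerian module if and only if `E_n ^ a ∈ J` for some `a > 0`. -/
theorem quotient_sge_iff_euler_pow_mem
    (𝒜 : ℤ → AddSubgroup (WeylAlgebra K n)) [DirectSum.Decomposition 𝒜]
    (hone : (1 : WeylAlgebra K n) ∈ 𝒜 0)
    (hmul : ∀ (i j : ℤ), ∀ a ∈ 𝒜 i, ∀ b ∈ 𝒜 j, a * b ∈ 𝒜 (i + j))
    (hsmul : ∀ (k : K) (i : ℤ), ∀ a ∈ 𝒜 i, k • a ∈ 𝒜 i)
    (hx : ∀ i : Fin n, Wx K n i ∈ 𝒜 1)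
    (hd : ∀ i : Fin n, Wd K n i ∈ 𝒜 (-1))
    (J : Submodule (WeylAlgebra K n) (WeylAlgebra K n)) :
    IsStronglyGeneralizedEulerian K n (WeylAlgebra K n ⧸ J)
        (fun i => (𝒜 i).map J.mkQ.toAddMonoidHom) ↔
      ∃ a : ℕ, 0 < a ∧ euler K n ^ a ∈ J := by
  have hsemiconj : ∀ j, ∀ w ∈ 𝒜 j,
      SemiconjBy w (euler K n) (euler K n - (j : WeylAlgebra K n)) := by
    intro j w hw
    have hgen : ∀ x ∈ Set.range (Wx K n) ∪ Set.range (Wd K n),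
        ∃ i : ℤ, x ∈ 𝒜 i ∧ x ∈ commutatorEigenspace (euler K n) (i : K) := by
      rintro _ (⟨i, rfl⟩ | ⟨i, rfl⟩)
      · exact ⟨1, hx i, by simpa using Wx_mem_commutatorEigenspace_euler i⟩
      · exact ⟨-1, hd i, by simpa using Wd_mem_commutatorEigenspace_euler i⟩
    simpa using semiconjBy_of_mem_commutatorEigenspace <| mem_commutatorEigenspace_of_mem_grade 𝒜
      hone hmul hsmul (adjoin_range_Wx_union_range_Wd K n) (euler K n) hgen hw
  constructor
  · rintro ⟨a, ha, H⟩
    refine ⟨a, ha, ?_⟩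
    simpa [← Submodule.Quotient.mk_smul, Submodule.Quotient.mk_eq_zero] using
      H 0 _ ⟨1, hone, rfl⟩
  · rintro ⟨a, ha, hEa⟩
    refine ⟨a, ha, ?_⟩
    rintro j _ ⟨w, hw, rfl⟩
    simpa [← Submodule.Quotient.mk_smul, Submodule.Quotient.mk_eq_zero,
      ((hsemiconj j w hw).pow_right a).eq] using J.smul_mem w hEa
end

section
/- If M is a strongly generalized Eulerian graded A_n(K)-module, then the twisted graded Matlis dual M(-n)^∨ = *Hom_K(M(-n), K) is also strongly generalized Eulerian. -/
open FreeAlgebra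

variable (K : Type) [Field K] (n : ℕ)

lemma Wdx_comm (K : Type) [Field K] (n : ℕ) (i : Fin n) :
    Wd K n i * Wx K n i = 1 + Wx K n i * Wd K n i := by
  have h := RingQuot.mkAlgHom_rel K (WeylRel.dx (K := K) (n := n) i)
  simpa [Wd, Wx, map_mul, map_add, map_one] using h

/-- If `M` is a strongly generalized Eulerian graded `A_n(K)`-module, then so is the twisted
graded Matlis dual `M(-n)^∨ = *Hom_K(M(-n), K)`.  The dual is presented as a graded
`A_n(K)`-module `D` together with the evaluation pairing `B : D → M → K`: the `A_n(K)`-action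
on the dual is by the transposition (`B(X_i • φ, m) = B(φ, X_i • m)`,
`B(∂_i • φ, m) = B(φ, τ(∂_i) • m) = -B(φ, ∂_i • m)`), the degree-`i` piece of `D` consists of
the functionals vanishing on `M(-n)_{-j} = M_{-j-n}` for `j ≠ i` and is identified by `B`
with `Hom_K(M_{-i-n}, K)` (the pairing is perfect). -/
theorem matlis_dual_sge [CharZero K]
    (M D : Type) [AddCommGroup M] [AddCommGroup D]
    [Module K M] [Module K D]
    [Module (WeylAlgebra K n) M] [Module (WeylAlgebra K n) D]
    [IsScalarTower K (WeylAlgebra K n) M] [IsScalarTower K (WeylAlgebra K n) D]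
    (gM : ℤ → AddSubgroup M) (gD : ℤ → AddSubgroup D)
    (hM : IsGradedWeylModule K n M gM) (hD : IsGradedWeylModule K n D gD)
    (B : D →ₗ[K] M →ₗ[K] K)
    (hBX : ∀ (φ : D) (m : M) (i : Fin n), B (Wx K n i • φ) m = B φ (Wx K n i • m))
    (hBD : ∀ (φ : D) (m : M) (i : Fin n), B (Wd K n i • φ) m = -B φ (Wd K n i • m))
    (horth : ∀ (i j : ℤ), ∀ φ ∈ gD i, ∀ m ∈ gM j, j ≠ -i - n → B φ m = 0)
    (hnondeg : ∀ (i : ℤ), ∀ φ ∈ gD i, (∀ m ∈ gM (-i - n), B φ m = 0) → φ = 0)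
    (hfull : ∀ (i : ℤ) (g : M →ₗ[K] K),
      (∀ (j : ℤ), j ≠ -i - n → ∀ m ∈ gM j, g m = 0) →
      ∃ φ ∈ gD i, ∀ m ∈ gM (-i - n), B φ m = g m)
    (hsge : IsStronglyGeneralizedEulerian K n M gM) :
    IsStronglyGeneralizedEulerian K n D gD := by
  classical
  obtain ⟨a, ha, hMe⟩ := hsge
  refine ⟨a, ha, ?_⟩
  intro j φ hφ
  -- stability of gD j under the Euler operator
  have hstabD : ∀ ψ ∈ gD j, euler K n • ψ ∈ gD j := by
    intro ψ hψ
    rw [euler, Finset.sum_smul]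
    refine AddSubgroup.sum_mem _ fun i _ => ?_
    rw [mul_smul]
    have := hD.2.1 i (j - 1) _ (hD.2.2 i j ψ hψ)
    simpa using this
  have hcD : ∀ (k : ℕ), ∀ ψ ∈ gD j,
      ((euler K n - (j : WeylAlgebra K n)) ^ k) • ψ ∈ gD j := by
    intro k
    induction k with
    | zero => intro ψ hψ; simpa using hψ
    | succ k ih =>
      intro ψ hψ
      rw [pow_succ, mul_smul]
      apply ih
      rw [sub_smul]
      refine AddSubgroup.sub_mem _ (hstabD ψ hψ) ?_
      rw [Int.cast_smul_eq_zsmul]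
      exact AddSubgroup.zsmul_mem _ hψ _
  -- key pairing identity
  have heul : ∀ (ψ : D) (m : M),
      B (euler K n • ψ) m = -(n • B ψ m) - B ψ (euler K n • m) := by
    intro ψ m
    have h1 : B (euler K n • ψ) m
        = ∑ i : Fin n, B ((Wx K n i * Wd K n i) • ψ) m := by
      rw [euler, Finset.sum_smul, map_sum, LinearMap.sum_apply]
    have h2 : ∀ i : Fin n, B ((Wx K n i * Wd K n i) • ψ) m
        = -(B ψ m) - B ψ ((Wx K n i * Wd K n i) • m) := by
      intro i
      rw [mul_smul, hBX, hBD, ← mul_smul, Wdx_comm, add_smul, one_smul, map_add]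
      ring
    have h3 : B ψ (euler K n • m)
        = ∑ i : Fin n, B ψ ((Wx K n i * Wd K n i) • m) := by
      rw [euler, Finset.sum_smul, map_sum]
    rw [h1, Finset.sum_congr rfl (fun i _ => h2 i), Finset.sum_sub_distrib, h3,
      Finset.sum_const, Finset.card_univ, Fintype.card_fin, smul_neg]
  have key : ∀ (ψ : D) (m : M),
      B ((euler K n - (j : WeylAlgebra K n)) • ψ) m
        = -(B ψ ((euler K n - ((-j - n : ℤ) : WeylAlgebra K n)) • m)) := by
    intro ψ m
    rw [sub_smul, sub_smul, map_sub, LinearMap.sub_apply, heul,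
      Int.cast_smul_eq_zsmul, Int.cast_smul_eq_zsmul, map_zsmul,
      LinearMap.smul_apply, map_sub, map_zsmul]
    simp only [zsmul_eq_mul, nsmul_eq_mul]
    push_cast
    ring
  have keypow : ∀ (k : ℕ) (ψ : D) (m : M),
      B (((euler K n - (j : WeylAlgebra K n)) ^ k) • ψ) m
        = (-1 : K) ^ k * B ψ (((euler K n - ((-j - n : ℤ) : WeylAlgebra K n)) ^ k) • m) := by
    intro k
    induction k with
    | zero => intro ψ m; simp
    | succ k ih =>
      intro ψ m
      rw [pow_succ, mul_smul, ih, key, ← mul_smul, ← pow_succ']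
      ring
  apply hnondeg j _ (hcD a φ hφ)
  intro m hm
  rw [keypow, hMe (-j - n) m hm]
  simp
end
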